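/- Let G be an abelian group, l a prime, and e ≥ 1. Suppose G/l^e is cyclic generated by the class of an element x ∈ G with l^e·x = 0, and G/l ≅ Z/l. Then the natural surjection G/l^{e+1} → G/l^e is an isomorphism, and consequently l^e·G is l-divisible. -/

import Mathlib

/-!
If `G = ℤx + nG` with `n • x = 0`, then `nG = n(ℤx + nG) = n²G`. For `n = l^e` with `e ≥ 1`
this gives `l^e G = l^{2e} G ⊆ l^{e+1} G`, so each element `l^{e+1} y` of `l^e G` is `l • (l^e y)`.
-/

/-- The subgroup `n·G` of an abelian group `G`. -/
def nSub (G : Type*) [AddCommGroup G] (n : ℤ) : AddSubgroup G :=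
  (n • AddMonoidHom.id G).range

section nSub

variable {G : Type*} [AddCommGroup G]

@[simp]
lemma mem_nSub {n : ℤ} {g : G} : g ∈ nSub G n ↔ ∃ y : G, n • y = g := by
  simp [nSub, AddMonoidHom.mem_range]

lemma nSub_le_of_dvd {m n : ℤ} (hmn : m ∣ n) : nSub G n ≤ nSub G m := by
  obtain ⟨k, rfl⟩ := hmn
  rintro _ ⟨y, rfl⟩
  exact mem_nSub.mpr ⟨k • y, by simp [mul_comm m k, mul_smul, smul_comm m k y]⟩

lemma nSub_mul_self_eq {n : ℤ} {x : G} (hx : n • x = 0)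
    (hgen : ∀ g : G, ∃ a : ℤ, g - a • x ∈ nSub G n) : nSub G (n * n) = nSub G n := by
  refine le_antisymm (nSub_le_of_dvd (dvd_mul_right n n)) ?_
  rintro _ ⟨h, rfl⟩
  obtain ⟨a, ha⟩ := hgen h
  obtain ⟨k, hk⟩ := mem_nSub.mp ha
  have hh : h = a • x + n • k := by rw [hk]; abel
  refine mem_nSub.mpr ⟨k, ?_⟩
  simp [hh, mul_smul, smul_comm n a x, hx]

lemma exists_smul_eq_of_nSub_le {l m : ℤ} (hle : nSub G m ≤ nSub G (l * m)) :
    ∀ g ∈ nSub G m, ∃ y ∈ nSub G m, l • y = g := by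
  intro g hg
  obtain ⟨y, rfl⟩ := mem_nSub.mp (hle hg)
  exact ⟨m • y, mem_nSub.mpr ⟨y, rfl⟩, (mul_smul l m y).symm⟩

end nSub

theorem stmt_14_general {G : Type*} [AddCommGroup G] (l : ℕ)
    (e : ℕ) (he : 1 ≤ e) (x : G) (hx : ((l : ℤ) ^ e) • x = 0)
    (hgen : ∀ g : G, ∃ a : ℤ, g - a • x ∈ nSub G ((l : ℤ) ^ e)) :
    (∀ g : G, g ∈ nSub G ((l : ℤ) ^ e) → g ∈ nSub G ((l : ℤ) ^ (e + 1))) ∧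
    (∀ g ∈ nSub G ((l : ℤ) ^ e), ∃ y ∈ nSub G ((l : ℤ) ^ e), (l : ℤ) • y = g) := by
  have hle : nSub G ((l : ℤ) ^ e) ≤ nSub G ((l : ℤ) ^ (e + 1)) :=
    calc nSub G ((l : ℤ) ^ e) = nSub G ((l : ℤ) ^ e * (l : ℤ) ^ e) :=
          (nSub_mul_self_eq hx hgen).symm
      _ ≤ nSub G ((l : ℤ) ^ (e + 1)) :=
          nSub_le_of_dvd (by rw [← pow_add]; exact pow_dvd_pow _ (by omega))
  exact ⟨fun g hg => hle hg, exists_smul_eq_of_nSub_le (by rwa [pow_succ'] at hle)⟩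

/-- Let `G` be an abelian group, `l` a prime, `e ≥ 1`.  Suppose `G/l^e` is
generated by the class of an `l^e`-torsion element `x ∈ G`, and `G/l ≅ ℤ/l`.
Then the natural surjection `G/l^{e+1} → G/l^e` is an isomorphism (i.e.
`l^e·G ⊆ l^{e+1}·G`), and consequently `l^e·G` is `l`-divisible. -/
theorem stmt_14 {G : Type*} [AddCommGroup G] (l : ℕ) (hl : l.Prime)
    (e : ℕ) (he : 1 ≤ e) (x : G) (hx : ((l : ℤ) ^ e) • x = 0)
    (hgen : ∀ g : G, ∃ a : ℤ, g - a • x ∈ nSub G ((l : ℤ) ^ e))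
    (hmodl : Nonempty ((G ⧸ nSub G (l : ℤ)) ≃+ ZMod l)) :
    (∀ g : G, g ∈ nSub G ((l : ℤ) ^ e) → g ∈ nSub G ((l : ℤ) ^ (e + 1))) ∧
    (∀ g ∈ nSub G ((l : ℤ) ^ e), ∃ y ∈ nSub G ((l : ℤ) ^ e), (l : ℤ) • y = g) :=
  stmt_14_general l e he x hx hgen
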